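/- For every a : ZMod d × ZMod d → ℂ with Σ_{r,s} |a_{r,s}|² = 1, the operator P_a satisfies the trace-preservation (normalization) condition: for all k, k' ∈ ZMod d, Σ_{i,j} (P_a)_{(i,j,k),(i,j,k')} = δ_{k,k'}. Hence P_a, being also positive semidefinite, is the operator of a trace-preserving covariant quantum operation. -/

import Mathlib

open Matrix Kronecker BigOperators
open scoped ComplexOrder

/-- ω = exp(2πi/d). -/
noncomputable def omega (d : ℕ) : ℂ := Complex.exp (2 * Real.pi * Complex.I / d)

/-- The Weyl–Heisenberg matrix `U_{p,q}`. -/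
noncomputable def WH (d : ℕ) [NeZero d] (p q : ZMod d) : Matrix (ZMod d) (ZMod d) ℂ :=
  fun j k => if j = k + p then omega d ^ (q.val * k.val) else 0

/-- The operator `P_a` on `(ℂ^d)^⊗3` associated to the coefficients `a`:
`(P_a)_{(i,j,k),(i',j',k')} = (1/d) Σ_{r,s,r',s'} a_{rs} conj(a_{r's'})
  (U_{rs}ᴴ U_{r's'})_{i,i'} (U_{rs})_{j,k} conj((U_{r's'})_{j',k'})`. -/
noncomputable def Pa (d : ℕ) [NeZero d] (a : ZMod d × ZMod d → ℂ) :
    Matrix (ZMod d × ZMod d × ZMod d) (ZMod d × ZMod d × ZMod d) ℂ :=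
  fun x y => (d : ℂ)⁻¹ * ∑ r : ZMod d, ∑ s : ZMod d, ∑ r' : ZMod d, ∑ s' : ZMod d,
    a (r, s) * (starRingEnd ℂ) (a (r', s')) * ((WH d r s)ᴴ * WH d r' s') x.1 y.1 *
      WH d r s x.2.1 x.2.2 * (starRingEnd ℂ) (WH d r' s' y.2.1 y.2.2)

/-!
`P_a` is `1/d` times the kernel built in the same way from a family of matrices `U_t` and
coefficients `a_t`. Such a kernel factors as `Bᴴ B` with `B_{m,(i,j,k)} = Σ_t conj(a_t) (U_t)_{m,i}
conj((U_t)_{j,k})`, hence is positive semidefinite. Its partial trace over the first two factors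
is `Σ_{t,t'} a_t conj(a_{t'}) tr(U_tᴴ U_{t'}) (U_{t'}ᴴ U_t)_{k',k}`. The Weyl–Heisenberg matrices
are unitary and trace-orthogonal, `tr(U_{rs}ᴴ U_{r's'}) = d δ_{(r,s),(r',s')}` (orthogonality of the
characters of `ZMod d`), so this collapses to `d Σ |a_{rs}|² δ_{k,k'}`.
-/

open Finset ComplexConjugate

section TripleKernel

variable {ι n : Type*} [Fintype ι] [Fintype n]

noncomputable def tripleKernel (a : ι → ℂ) (U : ι → Matrix n n ℂ) :
    Matrix (n × n × n) (n × n × n) ℂ :=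
  fun x y => ∑ t, ∑ t', a t * conj (a t') * ((U t)ᴴ * U t') x.1 y.1 *
    U t x.2.1 x.2.2 * conj (U t' y.2.1 y.2.2)

theorem tripleKernel_eq_conjTranspose_mul_self (a : ι → ℂ) (U : ι → Matrix n n ℂ) :
    tripleKernel a U =
      (of fun m x => ∑ t, conj (a t) * U t m x.1 * conj (U t x.2.1 x.2.2))ᴴ *
        of fun m x => ∑ t, conj (a t) * U t m x.1 * conj (U t x.2.1 x.2.2) := by
  ext x y
  simp only [tripleKernel, mul_apply, conjTranspose_apply, of_apply, star_sum, star_mul',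
    RCLike.star_def, Complex.conj_conj, sum_mul, mul_sum]
  conv_rhs => simp only [sum_comm (γ := n) (α := ι)]; rw [sum_comm]
  refine sum_congr rfl fun t _ => sum_congr rfl fun t' _ => sum_congr rfl fun m _ => ?_
  ring

theorem posSemidef_tripleKernel (a : ι → ℂ) (U : ι → Matrix n n ℂ) :
    (tripleKernel a U).PosSemidef := by
  rw [tripleKernel_eq_conjTranspose_mul_self]
  exact posSemidef_conjTranspose_mul_self _

theorem sum_tripleKernel_apply (a : ι → ℂ) (U : ι → Matrix n n ℂ) (k k' : n) :
    ∑ i, ∑ j, tripleKernel a U (i, j, k) (i, j, k') =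
      ∑ t, ∑ t', a t * conj (a t') * trace ((U t)ᴴ * U t') * ((U t')ᴴ * U t) k' k := by
  simp only [tripleKernel, sum_comm (γ := n) (α := ι)]
  refine sum_congr rfl fun t _ => sum_congr rfl fun t' _ => ?_
  simp only [trace, diag_apply, mul_apply (M := (U t')ᴴ), conjTranspose_apply, RCLike.star_def,
    sum_mul, mul_sum]
  rw [sum_comm]
  refine sum_congr rfl fun i _ => sum_congr rfl fun j _ => ?_
  ring

theorem sum_tripleKernel_apply_of_orthogonal [DecidableEq ι] [DecidableEq n]
    (a : ι → ℂ) (U : ι → Matrix n n ℂ) (c : ℂ) (hU : ∀ t, (U t)ᴴ * U t = 1)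
    (htr : ∀ t t', trace ((U t)ᴴ * U t') = if t = t' then c else 0) (k k' : n) :
    ∑ i, ∑ j, tripleKernel a U (i, j, k) (i, j, k') =
      c * ((∑ t, ‖a t‖ ^ 2 : ℝ) : ℂ) * if k = k' then 1 else 0 := by
  simp only [sum_tripleKernel_apply, htr, hU, one_apply, mul_ite, mul_zero, ite_mul, zero_mul,
    sum_ite_eq, mem_univ, if_true, Complex.mul_conj, Complex.normSq_eq_norm_sq, eq_comm (a := k'),
    mul_one]
  split_ifs
  · push_cast
    rw [mul_sum]
    exact sum_congr rfl fun t _ => mul_comm _ _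
  · exact sum_const_zero

end TripleKernel

section WeylHeisenberg

variable {d : ℕ} [NeZero d]

theorem omega_pow_val_mul_val (q k : ZMod d) :
    omega d ^ (q.val * k.val) = ZMod.stdAddChar (q * k) := by
  have hqk : q * k = (((q.val * k.val : ℕ) : ℤ) : ZMod d) := by simp
  rw [hqk, ZMod.stdAddChar_coe, omega, ← Complex.exp_nat_mul]
  push_cast
  ring_nf

theorem WH_apply (p q j k : ZMod d) :
    WH d p q j k = if j = k + p then ZMod.stdAddChar (q * k) else 0 := by
  rw [WH, omega_pow_val_mul_val]

theorem conjTranspose_WH_mul_WH_apply (r s r' s' i i' : ZMod d) :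
    ((WH d r s)ᴴ * WH d r' s') i i' =
      if i + r = i' + r' then ZMod.stdAddChar (s' * i' - s * i) else 0 := by
  simp only [mul_apply, conjTranspose_apply, WH_apply, RCLike.star_def, apply_ite conj, map_zero,
    ite_mul, zero_mul, mul_ite, mul_zero, sum_ite_eq', mem_univ, if_true]
  rw [sub_eq_add_neg, AddChar.map_add_eq_mul, AddChar.map_neg_eq_conj, mul_comm]
  split_ifs <;> simp_all

theorem conjTranspose_WH_mul_self (p q : ZMod d) : (WH d p q)ᴴ * WH d p q = 1 := by
  ext i i'
  simp only [conjTranspose_WH_mul_WH_apply, one_apply, add_left_inj]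
  split_ifs with h
  · rw [h, sub_self, AddChar.map_zero_eq_one]
  · rfl

theorem trace_conjTranspose_WH_mul_WH (r s r' s' : ZMod d) :
    trace ((WH d r s)ᴴ * WH d r' s') = if (r, s) = (r', s') then (d : ℂ) else 0 := by
  simp only [trace, diag_apply, conjTranspose_WH_mul_WH_apply, add_right_inj, ← sub_mul]
  rcases eq_or_ne r r' with rfl | hr
  · simp only [if_true, mul_comm _ (_ : ZMod d),
      AddChar.sum_mulShift _ (ZMod.isPrimitive_stdAddChar d), ZMod.card, sub_eq_zero, Prod.mk.injEq,
      true_and, eq_comm, Nat.cast_ite, Nat.cast_zero]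
  · simp [hr]

end WeylHeisenberg

theorem Pa_eq_smul_tripleKernel (d : ℕ) [NeZero d] (a : ZMod d × ZMod d → ℂ) :
    Pa d a = (d : ℂ)⁻¹ • tripleKernel a (fun rs => WH d rs.1 rs.2) := by
  ext x y
  simp only [Pa, tripleKernel, Matrix.smul_apply, smul_eq_mul, Fintype.sum_prod_type]

/-- For normalized coefficients `a`, `P_a` satisfies the trace-preservation condition
`Σ_{i,j} (P_a)_{(i,j,k),(i,j,k')} = δ_{k,k'}` and is positive semidefinite; hence it is
the operator of a trace-preserving covariant quantum operation. -/
theorem Pa_trace_preserving (d : ℕ) [NeZero d] (a : ZMod d × ZMod d → ℂ)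
    (ha : ∑ rs : ZMod d × ZMod d, ‖a rs‖ ^ 2 = 1) :
    (∀ k k' : ZMod d,
      (∑ i : ZMod d, ∑ j : ZMod d, Pa d a (i, j, k) (i, j, k')) =
        if k = k' then 1 else 0) ∧
    (Pa d a).PosSemidef := by
  rw [Pa_eq_smul_tripleKernel]
  refine ⟨fun k k' => ?_, (posSemidef_tripleKernel _ _).smul (by positivity)⟩
  have hd : (d : ℂ) ≠ 0 := Nat.cast_ne_zero.mpr (NeZero.ne d)
  simp only [Matrix.smul_apply, smul_eq_mul, ← mul_sum]
  rw [sum_tripleKernel_apply_of_orthogonal _ _ (d : ℂ) (fun _ => conjTranspose_WH_mul_self _ _)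
    (fun _ _ => trace_conjTranspose_WH_mul_WH _ _ _ _), ha, Complex.ofReal_one, mul_one,
    ← mul_assoc, inv_mul_cancel₀ hd, one_mul]
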